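/- The symmetric map τ on [0,1] determined by τ(0) = 0, symmetry τ(1−x) = τ(x), and slopes on [0,1/2] equal to 2 on [0, x₁], 2/3 on [x₁, 1/4], 2 on [1/4, x₂], and 6 on [x₂, 1/2] — where x₁ is the point with τ(x₁) = 1/4 on the first piece (x₁ = 1/8) and x₂ the point with τ(x₂) = 3/4 on the third piece — satisfies τ(1/2) = 1 and preserves the density f = (1/2)·χ_{[0,1/4]∪[3/4,1]} + (3/2)·χ_{[1/4,3/4]}. -/

import Mathlib

open MeasureTheory Set ENNReal

noncomputable section

/-- The symmetric piecewise linear map τ for λ = 1/2, with slopes 2, 2/3, 2, 6 on [0,1/2]. -/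
def tauLhalf : ℝ → ℝ := fun x =>
  let y := if x ≤ 1/2 then x else 1 - x
  if y ≤ 1/8 then 2 * y
  else if y ≤ 1/4 then (2/3) * y + 1/6
  else if y ≤ 11/24 then 2 * y - 1/6
  else 6 * y - 2

/-- The density f = (1/2)·χ_{[0,1/4]∪[3/4,1]} + (3/2)·χ_{[1/4,3/4]}. -/
def densLhalf : ℝ → ℝ≥0∞ := fun x => if 1/4 ≤ x ∧ x ≤ 3/4 then 3/2 else 1/2

/-!
Every `y ∈ (0, 1)` off finitely many points has exactly two preimages under `τ`, mirror images
`x` and `1 - x` of each other, at which `|τ'| = s` and `f = c` agree; invariance of `f` is then the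
Frobenius–Perron identity `2 c / s = f y`. By this symmetry the preimage integral over `[0, 1]` is
twice the one over `(0, 1/2)`, where `τ` has four increasing affine branches. On their image
intervals `(0, 1/4)`, `(1/4, 1/3)`, `(1/3, 3/4)`, `(3/4, 1)` the identity reads
`2·(1/2)/2 = 1/2`, `2·(1/2)/(2/3) = 3/2`, `2·(3/2)/2 = 3/2` and `2·(3/2)/6 = 1/2`.
-/

section Lebesgue

variable {h : ℝ → ℝ≥0∞} {S : Set ℝ}

theorem setLIntegral_Ioo_inter_split (hS : MeasurableSet S) {a b c : ℝ} (hab : a < b)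
    (hbc : b ≤ c) :
    ∫⁻ x in Ioo a c ∩ S, h x = (∫⁻ x in Ioo a b ∩ S, h x) + ∫⁻ x in Ioo b c ∩ S, h x := by
  rw [← Ioo_union_Ico_eq_Ioo hab hbc, union_inter_distrib_right,
    lintegral_union (measurableSet_Ico.inter hS) ((Ico_disjoint_Ico_same.mono_left
      Ioo_subset_Ico_self).mono inter_subset_left inter_subset_left),
    setLIntegral_congr (ae_eq_set_inter (Ioo_ae_eq_Ico (a := b) (b := c)).symm (ae_eq_refl S))]

theorem setLIntegral_Ioo_inter_of_eqOn (hS : MeasurableSet S) {u v : ℝ} {c : ℝ≥0∞}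
    (hh : ∀ x ∈ Ioo u v, h x = c) :
    ∫⁻ x in Ioo u v ∩ S, h x = c * volume (Ioo u v ∩ S) := by
  rw [setLIntegral_congr_fun (measurableSet_Ioo.inter hS) fun x hx => hh x hx.1,
    setLIntegral_const]

theorem volume_Ioo_inter_preimage_of_eqOn_affine {T : ℝ → ℝ} {p q a b u v : ℝ} (ha : 0 < a)
    (hT : ∀ x ∈ Ioo p q, T x = a * x + b) (hu : a * p + b = u) (hv : a * q + b = v)
    (A : Set ℝ) :
    volume (Ioo p q ∩ T ⁻¹' A) = ENNReal.ofReal a⁻¹ * volume (Ioo u v ∩ A) := by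
  have hpre : Ioo p q ∩ T ⁻¹' A = (a * ·) ⁻¹' ((· + b) ⁻¹' (Ioo u v ∩ A)) := by
    ext x
    simp only [mem_inter_iff, mem_preimage, mem_Ioo, ← hu, ← hv]
    constructor
    · rintro ⟨hx, hTx⟩
      exact ⟨⟨by nlinarith [hx.1], by nlinarith [hx.2]⟩, hT x hx ▸ hTx⟩
    · rintro ⟨⟨hpx, hxq⟩, hAx⟩
      have hx : x ∈ Ioo p q := ⟨by nlinarith, by nlinarith⟩
      exact ⟨hx, (hT x hx).symm ▸ hAx⟩
  rw [hpre, Real.volume_preimage_mul_left ha.ne', measure_preimage_add_right,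
    abs_of_pos (inv_pos.2 ha)]

theorem setLIntegral_Icc_zero_one_inter_of_symm (hS : MeasurableSet S)
    (hS_symm : ∀ x, 1 - x ∈ S ↔ x ∈ S) (hh : ∀ x, h (1 - x) = h x) :
    ∫⁻ x in Icc 0 1 ∩ S, h x = 2 * ∫⁻ x in Ioo 0 (1/2) ∩ S, h x := by
  have hr : MeasurePreserving (fun x : ℝ => 1 - x) volume volume :=
    Measure.measurePreserving_sub_left volume 1
  have hright : Ioo (1/2) 1 ∩ S = (fun x => 1 - x) ⁻¹' (Ioo 0 (1/2) ∩ S) := by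
    ext x
    simp only [mem_inter_iff, mem_preimage, mem_Ioo, hS_symm]
    constructor <;> rintro ⟨⟨h1, h2⟩, hx⟩ <;> exact ⟨⟨by linarith, by linarith⟩, hx⟩
  have hreflect : ∫⁻ x in Ioo (1/2) 1 ∩ S, h x = ∫⁻ x in Ioo 0 (1/2) ∩ S, h x :=
    calc ∫⁻ x in Ioo (1/2) 1 ∩ S, h x
        = ∫⁻ x in (fun x => 1 - x) ⁻¹' (Ioo 0 (1/2) ∩ S), h (1 - x) := by simp only [hright, hh]
      _ = ∫⁻ x in Ioo 0 (1/2) ∩ S, h x :=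
        hr.setLIntegral_comp_preimage_emb (Homeomorph.subLeft (1 : ℝ)).measurableEmbedding h _
  rw [setLIntegral_congr (ae_eq_set_inter Ioo_ae_eq_Icc.symm (ae_eq_refl S)),
    setLIntegral_Ioo_inter_split hS (b := 1/2) (by norm_num) (by norm_num), hreflect, two_mul]

end Lebesgue

theorem tauLhalf_one_sub (x : ℝ) : tauLhalf (1 - x) = tauLhalf x := by
  have hy : (if 1 - x ≤ 1/2 then 1 - x else 1 - (1 - x)) = if x ≤ 1/2 then x else 1 - x := by
    split_ifs <;> linarith
  simp only [tauLhalf, hy]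

theorem measurable_tauLhalf : Measurable tauLhalf := by
  have hle (c : ℝ) : MeasurableSet {y : ℝ | y ≤ c} := measurableSet_Iic
  have hfold : Measurable fun x : ℝ => if x ≤ 1/2 then x else 1 - x :=
    measurable_id.ite (hle _) (measurable_const.sub measurable_id)
  refine Measurable.comp (g := fun y : ℝ => if y ≤ 1/8 then 2 * y else if y ≤ 1/4 then
    (2/3) * y + 1/6 else if y ≤ 11/24 then 2 * y - 1/6 else 6 * y - 2) ?_ hfold
  exact Measurable.ite (hle _) (by fun_prop) <| Measurable.ite (hle _) (by fun_prop) <|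
    Measurable.ite (hle _) (by fun_prop) (by fun_prop)

theorem densLhalf_one_sub (x : ℝ) : densLhalf (1 - x) = densLhalf x := by
  have hmid : (1/4 ≤ 1 - x ∧ 1 - x ≤ 3/4) ↔ (1/4 ≤ x ∧ x ≤ 3/4) := by
    constructor <;> rintro ⟨h1, h2⟩ <;> constructor <;> linarith
  simp only [densLhalf, hmid]

theorem densLhalf_of_mem_Icc {x : ℝ} (hx : x ∈ Icc (1/4) (3/4)) :
    densLhalf x = ENNReal.ofReal (3/2) := by
  rw [densLhalf, if_pos (mem_Icc.1 hx), ENNReal.ofReal_div_of_pos two_pos, ENNReal.ofReal_ofNat,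
    ENNReal.ofReal_ofNat]

theorem densLhalf_of_notMem_Icc {x : ℝ} (hx : x ∉ Icc (1/4) (3/4)) :
    densLhalf x = ENNReal.ofReal (1/2) := by
  rw [densLhalf, if_neg (mt mem_Icc.2 hx), ENNReal.ofReal_div_of_pos two_pos, ENNReal.ofReal_one,
    ENNReal.ofReal_ofNat]

theorem densLhalf_of_mem_Ioo_of_le_quarter (u v : ℝ) (hv : v ≤ 1/4) :
    ∀ x ∈ Ioo u v, densLhalf x = ENNReal.ofReal (1/2) :=
  fun _ hx => densLhalf_of_notMem_Icc fun h => by linarith [hx.2, h.1]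

theorem densLhalf_of_mem_Ioo_of_quarter_le (u v : ℝ) (hu : 1/4 ≤ u) (hv : v ≤ 3/4) :
    ∀ x ∈ Ioo u v, densLhalf x = ENNReal.ofReal (3/2) :=
  fun _ hx => densLhalf_of_mem_Icc ⟨by linarith [hx.1], by linarith [hx.2]⟩

theorem densLhalf_of_mem_Ioo_of_three_quarters_le (u v : ℝ) (hu : 3/4 ≤ u) :
    ∀ x ∈ Ioo u v, densLhalf x = ENNReal.ofReal (1/2) :=
  fun _ hx => densLhalf_of_notMem_Icc fun h => by linarith [hx.1, h.2]

theorem setLIntegral_Ioo_zero_half_inter_preimage_tauLhalf {A : Set ℝ} (hA : MeasurableSet A) :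
    ∫⁻ x in Ioo 0 (1/2) ∩ tauLhalf ⁻¹' A, densLhalf x =
      ENNReal.ofReal (1/2) * (ENNReal.ofReal 2⁻¹ * volume (Ioo 0 (1/4) ∩ A)) +
      ENNReal.ofReal (1/2) * (ENNReal.ofReal (2/3)⁻¹ * volume (Ioo (1/4) (1/3) ∩ A)) +
      ENNReal.ofReal (3/2) * (ENNReal.ofReal 2⁻¹ * volume (Ioo (1/3) (3/4) ∩ A)) +
      ENNReal.ofReal (3/2) * (ENNReal.ofReal 6⁻¹ * volume (Ioo (3/4) 1 ∩ A)) := by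
  have hS := measurable_tauLhalf hA
  rw [setLIntegral_Ioo_inter_split hS (b := 11/24) (by norm_num) (by norm_num),
    setLIntegral_Ioo_inter_split hS (b := 1/4) (by norm_num) (by norm_num),
    setLIntegral_Ioo_inter_split hS (b := 1/8) (by norm_num) (by norm_num),
    setLIntegral_Ioo_inter_of_eqOn hS (densLhalf_of_mem_Ioo_of_le_quarter 0 (1/8) (by norm_num)),
    setLIntegral_Ioo_inter_of_eqOn hS (densLhalf_of_mem_Ioo_of_le_quarter (1/8) (1/4) le_rfl),
    setLIntegral_Ioo_inter_of_eqOn hS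
      (densLhalf_of_mem_Ioo_of_quarter_le (1/4) (11/24) le_rfl (by norm_num)),
    setLIntegral_Ioo_inter_of_eqOn hS
      (densLhalf_of_mem_Ioo_of_quarter_le (11/24) (1/2) (by norm_num) (by norm_num)),
    volume_Ioo_inter_preimage_of_eqOn_affine (p := 0) (q := 1/8) (u := 0) (v := 1/4)
      (a := 2) (b := 0) two_pos
      (fun x ⟨_, _⟩ => by simp only [tauLhalf]; split_ifs <;> linarith) (by norm_num) (by norm_num),
    volume_Ioo_inter_preimage_of_eqOn_affine (p := 1/8) (q := 1/4) (u := 1/4) (v := 1/3)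
      (a := 2/3) (b := 1/6) (by norm_num)
      (fun x ⟨_, _⟩ => by simp only [tauLhalf]; split_ifs <;> linarith) (by norm_num) (by norm_num),
    volume_Ioo_inter_preimage_of_eqOn_affine (p := 1/4) (q := 11/24) (u := 1/3) (v := 3/4)
      (a := 2) (b := -1/6) two_pos
      (fun x ⟨_, _⟩ => by simp only [tauLhalf]; split_ifs <;> linarith) (by norm_num) (by norm_num),
    volume_Ioo_inter_preimage_of_eqOn_affine (p := 11/24) (q := 1/2) (u := 3/4) (v := 1)
      (a := 6) (b := -2) (by norm_num)
      (fun x ⟨_, _⟩ => by simp only [tauLhalf]; split_ifs <;> linarith) (by norm_num) (by norm_num)]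

theorem setLIntegral_densLhalf_of_subset_Icc {A : Set ℝ} (hA : MeasurableSet A)
    (hsub : A ⊆ Icc 0 1) :
    ∫⁻ x in A, densLhalf x =
      ENNReal.ofReal (1/2) * volume (Ioo 0 (1/4) ∩ A) +
      ENNReal.ofReal (3/2) * volume (Ioo (1/4) (1/3) ∩ A) +
      ENNReal.ofReal (3/2) * volume (Ioo (1/3) (3/4) ∩ A) +
      ENNReal.ofReal (1/2) * volume (Ioo (3/4) 1 ∩ A) := by
  have hA_ae : ∫⁻ x in A, densLhalf x = ∫⁻ x in Ioo 0 1 ∩ A, densLhalf x := by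
    rw [setLIntegral_congr (ae_eq_set_inter Ioo_ae_eq_Icc (ae_eq_refl A)), inter_eq_right.2 hsub]
  rw [hA_ae, setLIntegral_Ioo_inter_split hA (b := 3/4) (by norm_num) (by norm_num),
    setLIntegral_Ioo_inter_split hA (b := 1/3) (by norm_num) (by norm_num),
    setLIntegral_Ioo_inter_split hA (b := 1/4) (by norm_num) (by norm_num),
    setLIntegral_Ioo_inter_of_eqOn hA (densLhalf_of_mem_Ioo_of_le_quarter 0 (1/4) le_rfl),
    setLIntegral_Ioo_inter_of_eqOn hA
      (densLhalf_of_mem_Ioo_of_quarter_le (1/4) (1/3) le_rfl (by norm_num)),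
    setLIntegral_Ioo_inter_of_eqOn hA
      (densLhalf_of_mem_Ioo_of_quarter_le (1/3) (3/4) (by norm_num) le_rfl),
    setLIntegral_Ioo_inter_of_eqOn hA (densLhalf_of_mem_Ioo_of_three_quarters_le (3/4) 1 le_rfl)]

/-- τ satisfies τ(1/2) = 1, is symmetric, and preserves the density f. -/
theorem stmt13 :
    tauLhalf (1/2) = 1 ∧
    (∀ x ∈ Set.Icc (0:ℝ) 1, tauLhalf (1 - x) = tauLhalf x) ∧
    (∀ A : Set ℝ, MeasurableSet A → A ⊆ Set.Icc (0:ℝ) 1 →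
      ∫⁻ x in Set.Icc (0:ℝ) 1 ∩ tauLhalf ⁻¹' A, densLhalf x = ∫⁻ x in A, densLhalf x) := by
  refine ⟨by norm_num [tauLhalf], fun x _ => tauLhalf_one_sub x, fun A hA hsub => ?_⟩
  rw [setLIntegral_Icc_zero_one_inter_of_symm (measurable_tauLhalf hA)
      (fun x => by rw [mem_preimage, mem_preimage, tauLhalf_one_sub]) densLhalf_one_sub,
    setLIntegral_Ioo_zero_half_inter_preimage_tauLhalf hA,
    setLIntegral_densLhalf_of_subset_Icc hA hsub]
  simp only [mul_add, ← mul_assoc, ← ENNReal.ofReal_ofNat 2,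
    ← ENNReal.ofReal_mul (by norm_num : (0:ℝ) ≤ 2),
    ← ENNReal.ofReal_mul (by norm_num : (0:ℝ) ≤ 2 * (1/2)),
    ← ENNReal.ofReal_mul (by norm_num : (0:ℝ) ≤ 2 * (3/2))]
  norm_num
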